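/- The matching produced by the men-proposing Gale-Shapley algorithm is man-optimal: for every man m and every stable matching μ, m does not strictly prefer μ(m) to his Gale-Shapley partner. -/

import Mathlib

namespace GS

/-- The `k` most-preferred elements of `S` according to the rank function `rank`
(lower rank = more preferred); if `S` has at most `k` elements this is all of `S`. -/
def topk {α : Type*} [DecidableEq α] (rank : α → ℕ) (k : ℕ) (S : Finset α) : Finset α :=
  S.filter fun a => (S.filter fun b => rank b < rank a).card < k

/-- An instance of the stable-matching problem with `n` women and `n` men.
`mpref m w` is the rank man `m` assigns to woman `w` (lower = more preferred),
and `wpref w m` is the rank woman `w` assigns to man `m`. -/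
structure Instance (n : ℕ) where
  mpref : Fin n → Fin n → ℕ
  wpref : Fin n → Fin n → ℕ
  mprefInj : ∀ m, Function.Injective (mpref m)
  wprefInj : ∀ w, Function.Injective (wpref w)

variable {n : ℕ}

/-- `prefers p a b` : `a` is strictly preferred to `b` under rank function `p`. -/
def prefers (p : Fin n → ℕ) (a b : Fin n) : Prop := p a < p b

/-- Given the current state `avail m` (the women who have not yet rejected man `m`),
the set of women man `m` proposes to tonight: his most-preferred available woman
(a singleton, or empty if no woman is available). -/
def proposals (I : Instance n) (avail : Fin n → Finset (Fin n)) (m : Fin n) :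
    Finset (Fin n) := topk (I.mpref m) 1 (avail m)

/-- The men proposing to woman `w` tonight. -/
def proposersOf (I : Instance n) (avail : Fin n → Finset (Fin n)) (w : Fin n) :
    Finset (Fin n) := Finset.univ.filter fun m => w ∈ proposals I avail m

/-- The men rejected by woman `w` tonight: all of tonight's proposers except
her most-preferred one. -/
def rejectedBy (I : Instance n) (avail : Fin n → Finset (Fin n)) (w : Fin n) :
    Finset (Fin n) := proposersOf I avail w \ topk (I.wpref w) 1 (proposersOf I avail w)

/-- One night of the men-proposing Gale-Shapley algorithm. -/
def step (I : Instance n) (avail : Fin n → Finset (Fin n)) :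
    Fin n → Finset (Fin n) :=
  fun m => (avail m).filter fun w => m ∉ rejectedBy I avail w

/-- `nights I t m` : the set of women who have not rejected man `m` before night `t`
(initially all women). -/
def nights (I : Instance n) (t : ℕ) : Fin n → Finset (Fin n) :=
  (step I)^[t] (fun _ => Finset.univ)

/-- The algorithm has terminated by night `T`: no man is rejected on night `T`. -/
def Stopped (I : Instance n) (T : ℕ) : Prop := step I (nights I T) = nights I T

/-- On night `T`, each man `m` serenades exactly under the window of `μ m`. -/
def MatchesAt (I : Instance n) (T : ℕ) (μ : Fin n ≃ Fin n) : Prop :=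
  ∀ m, proposals I (nights I T) m = {μ m}

/-- The bijection `μ` (from men to women) is the outcome of the men-proposing
Gale-Shapley algorithm on instance `I`: for some night `T` no rejection occurs and
every man `m` is matched with `μ m`. -/
def IsGSMatching (I : Instance n) (μ : Fin n ≃ Fin n) : Prop :=
  ∃ T, Stopped I T ∧ MatchesAt I T μ

/-- Stability of a matching `μ` (men to women): there is no unmatched pair `(w, m)`
each of whom strictly prefers the other to their partner under `μ`. -/
def Stable (I : Instance n) (μ : Fin n ≃ Fin n) : Prop :=
  ¬ ∃ m w, μ m ≠ w ∧ I.mpref m w < I.mpref m (μ m) ∧ I.wpref w m < I.wpref w (μ.symm w)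

/-- The instance in which the women in `L` replace their true preferences by the
false preference rankings `f`, everyone else being truthful. -/
def liarInstance (I : Instance n) (L : Finset (Fin n))
    (f : Fin n → Fin n → ℕ) (hf : ∀ w, Function.Injective (f w)) : Instance n where
  mpref := I.mpref
  wpref := fun w => if w ∈ L then f w else I.wpref w
  mprefInj := I.mprefInj
  wprefInj := fun w => by split_ifs; exacts [hf w, I.wprefInj w]

end GS

/-!
A woman who rejects a man `m` holds a proposal from some `m'` she prefers, and `m'` proposes to
her only while she is his favourite among the women still available to him. So if `m` were
rejected by `ν m` for a stable `ν` while every man still had his `ν`-partner available, the pair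
`(m', ν m)` would block `ν`. By induction on the nights, no man is ever rejected by his partner
in a stable matching; his Gale-Shapley partner, the best woman who never rejected him, is
therefore at least as good for him as any stable partner.
-/

namespace GS

variable {n : ℕ}

theorem mem_topk_one {α : Type*} [DecidableEq α] {rank : α → ℕ} {S : Finset α} {a : α} :
    a ∈ topk rank 1 S ↔ a ∈ S ∧ ∀ b ∈ S, ¬ rank b < rank a := by
  simp only [topk, Finset.mem_filter, Nat.lt_one_iff, Finset.card_eq_zero,
    Finset.filter_eq_empty_iff]

theorem nights_succ (I : Instance n) (t : ℕ) : nights I (t + 1) = step I (nights I t) :=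
  Function.iterate_succ_apply' _ _ _

theorem exists_wpref_lt_of_mem_rejectedBy {I : Instance n} {avail : Fin n → Finset (Fin n)}
    {w m : Fin n} (h : m ∈ rejectedBy I avail w) :
    ∃ m' ∈ proposersOf I avail w, I.wpref w m' < I.wpref w m := by
  rw [rejectedBy, Finset.mem_sdiff, mem_topk_one] at h
  by_contra! hbest
  exact h.2 ⟨h.1, fun m' hm' => (hbest m' hm').not_gt⟩

theorem mpref_lt_of_mem_proposersOf {I : Instance n} {avail : Fin n → Finset (Fin n)}
    {w m : Fin n} (h : m ∈ proposersOf I avail w) {w' : Fin n} (hw' : w' ∈ avail m)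
    (hne : w' ≠ w) : I.mpref m w < I.mpref m w' := by
  rw [proposersOf, Finset.mem_filter, proposals, mem_topk_one] at h
  exact lt_of_le_of_ne (not_lt.mp (h.2.2 w' hw')) fun heq => hne (I.mprefInj m heq).symm

theorem Stable.mem_step {I : Instance n} {ν : Fin n ≃ Fin n} (hν : Stable I ν)
    {avail : Fin n → Finset (Fin n)} (havail : ∀ m, ν m ∈ avail m) (m : Fin n) :
    ν m ∈ step I avail m := by
  refine Finset.mem_filter.mpr ⟨havail m, fun hrej => ?_⟩
  obtain ⟨m', hm', hpref⟩ := exists_wpref_lt_of_mem_rejectedBy hrej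
  have hne : ν m' ≠ ν m := fun h => hpref.ne (by rw [ν.injective h])
  exact hν ⟨m', ν m, hne, mpref_lt_of_mem_proposersOf hm' (havail m') hne, by simpa using hpref⟩

theorem Stable.mem_nights {I : Instance n} {ν : Fin n ≃ Fin n} (hν : Stable I ν) (t : ℕ) :
    ∀ m, ν m ∈ nights I t m := by
  induction t with
  | zero => exact fun _ => Finset.mem_univ _
  | succ t ih => rw [nights_succ]; exact hν.mem_step ih

end GS

open GS in
/-- Man-optimality: no man strictly prefers his partner in any stable matching `ν`
to his Gale-Shapley partner. -/
theorem gale_shapley_man_optimal (n : ℕ) (I : GS.Instance n)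
    (μ : Fin n ≃ Fin n) (hμ : IsGSMatching I μ)
    (ν : Fin n ≃ Fin n) (hν : Stable I ν) (m : Fin n) :
    ¬ prefers (I.mpref m) (ν m) (μ m) := by
  obtain ⟨T, -, hmatch⟩ := hμ
  have hproposes : μ m ∈ proposals I (nights I T) m := by
    rw [hmatch m]
    exact Finset.mem_singleton_self _
  exact (mem_topk_one.mp hproposes).2 (ν m) (hν.mem_nights T m)
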